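/- Define h(x) := x^α · m(τ > x) − M(x) for x ≥ 1, so that m(τ > x) = x^{−α}(M(x) + h(x)). Then for every continuity point x of M (equivalently, every x > 0 with {log_G(x/q₀)} > 0), lim_{n→∞} h(A_{k_n} · x) = 0, where k_n = ⌊G^{αn}⌋ and A_{k_n} = k_n^{1/α}. In other words, the return time τ belongs to the domain of geometric partial attraction of a semistable law of order α, with c = G^α, ℓ ≡ 1, subsequence k_n = ⌊G^{αn}⌋, and logarithmically periodic function M. -/

import Mathlib

open Set Filter Topology Real MeasureTheory

/-- The Fibonacci numbers `S₀ = 1, S₁ = 2, S_{n+1} = S_n + S_{n−1}`. -/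
def fibS : ℕ → ℕ
  | 0 => 1
  | 1 => 2
  | n + 2 => fibS (n + 1) + fibS n

/-- The golden mean `G = (1+√5)/2`. -/
noncomputable def goldG : ℝ := (1 + Real.sqrt 5) / 2

/-- The constant `q₀ = (3+√5)/(2√5)`. -/
noncomputable def qZero : ℝ := (3 + Real.sqrt 5) / (2 * Real.sqrt 5)

/-!
Binet's formula gives `S_n = q₀ G^n + O(1)`, and `m(τ > x) = λ^{j+1}` exactly when
`S_j ≤ x < S_{j+1}`. Since `λ = G^{-α}`, `x^α m(τ > x) = M(x)` as soon as this Fibonacci level `j`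
of `x` equals the geometric level `⌊log_G(x/q₀)⌋`, which holds for all large `x` whose fractional
part `{log_G(x/q₀)}` stays in a compact subset of `(0,1)`. Along `A_{k_n} x` we have
`k_n^{1/α} ~ G^n`, so `A_{k_n} x → ∞` while `{log_G(A_{k_n} x/q₀)} → {log_G(x/q₀)} > 0`;
hence `h(A_{k_n} x) = 0` for all large `n`.
-/

open goldenRatio

lemma goldG_eq_goldenRatio : goldG = φ := rfl

lemma one_lt_goldG : 1 < goldG := one_lt_goldenRatio

lemma qZero_pos : 0 < qZero := by
  unfold qZero
  positivity

lemma qZero_eq : qZero = φ ^ 2 / √5 := by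
  rw [goldenRatio_sq, qZero]
  field_simp
  ring

lemma fibS_eq_fib (n : ℕ) : fibS n = Nat.fib (n + 2) := by
  induction n using fibS.induct with
  | case1 => rfl
  | case2 => rfl
  | case3 n ih1 ih2 =>
    rw [fibS, ih1, ih2, Nat.fib_add_two (n := n + 2)]
    exact add_comm _ _

lemma fibS_monotone : Monotone fibS := fun m n hmn => by
  simp only [fibS_eq_fib]
  exact Nat.fib_mono (by omega)

lemma abs_fibS_sub_le (n : ℕ) : |(fibS n : ℝ) - qZero * goldG ^ n| ≤ 1 / 2 := by
  have h5 : (2 : ℝ) < √5 := (lt_sqrt zero_le_two).2 (by norm_num)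
  have hψ : |ψ| ^ (n + 2) ≤ 1 := pow_le_one₀ (abs_nonneg _)
    (abs_le.2 ⟨neg_one_lt_goldenConj.le, goldenConj_neg.le.trans zero_le_one⟩)
  rw [fibS_eq_fib, coe_fib_eq, qZero_eq, goldG_eq_goldenRatio,
    show (φ ^ (n + 2) - ψ ^ (n + 2)) / √5 - φ ^ 2 / √5 * φ ^ n = -(ψ ^ (n + 2) / √5) by ring,
    abs_neg, abs_div, abs_pow, abs_of_pos (by positivity : (0 : ℝ) < √5),
    div_le_iff₀ (by positivity)]
  linarith

theorem setOf_lt_eq_Ioc_pow {lam : ℝ} (h0 : 0 < lam) (h1 : lam < 1) {s : ℕ → ℕ}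
    (hs : Monotone s) {τ : ℝ → ℕ}
    (hτ : ∀ n : ℕ, ∀ y ∈ Ioc (lam ^ (n + 1)) (lam ^ n), τ y = s n) {x : ℝ} {j : ℕ}
    (hjx : (s j : ℝ) ≤ x) (hxj : x < s (j + 1)) :
    {y : ℝ | y ∈ Ioc (0 : ℝ) 1 ∧ x < (τ y : ℝ)} = Ioc 0 (lam ^ (j + 1)) := by
  ext y
  simp only [mem_ofPred_eq, mem_Ioc]
  constructor
  · rintro ⟨⟨hy0, hy1⟩, hxy⟩
    obtain ⟨m, hm1, hm2⟩ := exists_nat_pow_near_of_lt_one hy0 hy1 h0 h1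
    rw [hτ m y ⟨hm1, hm2⟩] at hxy
    have hjm : j + 1 ≤ m := by
      by_contra! hm
      exact hxy.not_ge ((Nat.cast_le.2 (hs (by omega))).trans hjx)
    exact ⟨hy0, hm2.trans (pow_le_pow_of_le_one h0.le h1.le hjm)⟩
  · rintro ⟨hy0, hy⟩
    have hy1 : y ≤ 1 := hy.trans (pow_le_one₀ h0.le h1.le)
    obtain ⟨m, hm1, hm2⟩ := exists_nat_pow_near_of_lt_one hy0 hy1 h0 h1
    have hjm : j + 1 ≤ m := by
      by_contra! hm
      have := (pow_lt_pow_iff_right_of_lt_one₀ h0 h1).1 (hm1.trans_le hy)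
      omega
    refine ⟨⟨hy0, hy1⟩, ?_⟩
    rw [hτ m y ⟨hm1, hm2⟩]
    exact hxj.trans_le (Nat.cast_le.2 (hs hjm))

theorem natFloor_add_fract {a : ℝ} (ha : 0 ≤ a) : (⌊a⌋₊ : ℝ) + Int.fract a = a := by
  rw [natCast_floor_eq_intCast_floor ha, Int.floor_add_fract]

theorem rpow_mul_rpow_neg_pow_eq {b q x : ℝ} (hb : 1 < b) (hq : 0 < q) (hx : 0 < x) (α : ℝ)
    {j : ℕ} (hj : (j : ℝ) + Int.fract (logb b (x / q)) = logb b (x / q)) :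
    x ^ α * (b ^ (-α)) ^ (j + 1) = b ^ (-α) * q ^ α * b ^ (α * Int.fract (logb b (x / q))) := by
  have hb0 : 0 < b := zero_lt_one.trans hb
  set f := Int.fract (logb b (x / q))
  have hx' : x = q * b ^ ((j : ℝ) + f) := by
    rw [hj, rpow_logb hb0 hb.ne' (div_pos hx hq)]
    field_simp
  rw [hx', mul_rpow hq.le (by positivity), ← rpow_mul hb0.le, ← rpow_natCast, ← rpow_mul hb0.le,
    mul_assoc, ← rpow_add hb0,
    show ((j : ℝ) + f) * α + -α * ↑(j + 1) = -α + α * f by push_cast; ring, rpow_add hb0]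
  ring

theorem eventually_level_eq_natFloor_logb {b q C a c : ℝ} (hb : 1 < b) (hq : 0 < q) {s : ℕ → ℝ}
    (hs : ∀ n, |s n - q * b ^ n| ≤ C) (ha : 0 < a) (hc : c < 1) :
    ∀ᶠ x in atTop, Int.fract (logb b (x / q)) ∈ Icc a c →
      s ⌊logb b (x / q)⌋₊ ≤ x ∧ x < s (⌊logb b (x / q)⌋₊ + 1) := by
  have hb0 : 0 < b := zero_lt_one.trans hb
  have hba : 0 < b ^ a - 1 := sub_pos.2 (one_lt_rpow hb ha)
  have hbc : 0 < b - b ^ c := sub_pos.2 (by simpa using rpow_lt_rpow_of_exponent_lt hb hc)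
  have hxb : Tendsto (fun x : ℝ => x / b) atTop atTop := tendsto_id.atTop_div_const hb0
  filter_upwards [eventually_ge_atTop q, (hxb.atTop_mul_const hba).eventually_ge_atTop C,
    (hxb.atTop_mul_const hbc).eventually_gt_atTop C] with x hxq hlo hhi hf
  set L := logb b (x / q)
  have hL := natFloor_add_fract (logb_nonneg hb ((one_le_div hq).2 hxq))
  set P := q * b ^ ⌊L⌋₊
  have hx : x = P * b ^ Int.fract L := by
    rw [mul_assoc, ← rpow_natCast, ← rpow_add hb0, hL,
      rpow_logb hb0 hb.ne' (div_pos (hq.trans_le hxq) hq)]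
    field_simp
  have hfa : b ^ a ≤ b ^ Int.fract L := rpow_le_rpow_of_exponent_le hb.le hf.1
  have hfc : b ^ Int.fract L ≤ b ^ c := rpow_le_rpow_of_exponent_le hb.le hf.2
  have hPx : x / b ≤ P := by
    rw [div_le_iff₀ hb0, hx]
    gcongr
    simpa using rpow_le_rpow_of_exponent_le hb.le (Int.fract_lt_one L).le
  have hs0 := abs_le.1 (hs ⌊L⌋₊)
  have hs1 := abs_le.1 (hs (⌊L⌋₊ + 1))
  rw [pow_succ, ← mul_assoc] at hs1
  constructor
  · nlinarith [mul_le_mul_of_nonneg_right hPx hba.le]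
  · nlinarith [mul_le_mul_of_nonneg_right hPx hbc.le]

theorem tendsto_natFloor_rpow_div_pow {b α : ℝ} (hb : 1 < b) (hα : 0 < α) :
    Tendsto (fun n : ℕ => (⌊b ^ (α * n)⌋₊ : ℝ) ^ (1 / α) / b ^ n) atTop (𝓝 1) := by
  have hb0 : 0 < b := zero_lt_one.trans hb
  have hpow : ∀ n : ℕ, b ^ (α * n) = (b ^ α) ^ n := fun n => by
    rw [rpow_mul hb0.le, rpow_natCast]
  have hratio : Tendsto (fun n : ℕ => (⌊b ^ (α * n)⌋₊ : ℝ) / b ^ (α * n)) atTop (𝓝 1) := by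
    simp only [hpow]
    exact tendsto_nat_floor_div_atTop.comp
      (tendsto_pow_atTop_atTop_of_one_lt (one_lt_rpow hb hα))
  convert hratio.rpow_const (p := 1 / α) (Or.inl one_ne_zero) using 2 with n
  · rw [div_rpow (Nat.cast_nonneg _) (by positivity), ← rpow_mul hb0.le,
      mul_comm α, mul_assoc, mul_one_div_cancel hα.ne', mul_one, rpow_natCast]
  · simp

theorem tendsto_atTop_of_div_pow_tendsto_one {b : ℝ} (hb : 1 < b) {r : ℕ → ℝ}
    (hr : Tendsto (fun n => r n / b ^ n) atTop (𝓝 1)) : Tendsto r atTop atTop :=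
  (hr.pos_mul_atTop zero_lt_one (tendsto_pow_atTop_atTop_of_one_lt hb)).congr fun n =>
    div_mul_cancel₀ _ (pow_pos (zero_lt_one.trans hb) n).ne'

theorem tendsto_fract_logb_mul_div {b q x : ℝ} (hb : 1 < b) (hq : 0 < q) (hx : 0 < x)
    (hfract : 0 < Int.fract (logb b (x / q))) {r : ℕ → ℝ}
    (hr : Tendsto (fun n => r n / b ^ n) atTop (𝓝 1)) :
    Tendsto (fun n => Int.fract (logb b (r n * x / q))) atTop
      (𝓝 (Int.fract (logb b (x / q)))) := by
  have hb0 : 0 < b := zero_lt_one.trans hb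
  have hsplit : ∀ᶠ n : ℕ in atTop,
      logb b (r n * x / q) = logb b (r n / b ^ n * (x / q)) + n := by
    filter_upwards [(tendsto_atTop_of_div_pow_tendsto_one hb hr).eventually_gt_atTop 0] with n hn
    rw [show r n * x / q = r n / b ^ n * (x / q) * b ^ n by field_simp,
      logb_mul (by positivity) (by positivity), logb_pow, logb_self_eq_one hb, mul_one]
  have hL : Tendsto (fun n => logb b (r n / b ^ n * (x / q))) atTop (𝓝 (logb b (x / q))) := by
    simpa using (hr.mul_const (x / q)).logb (by positivity)
  have hcont : ContinuousAt Int.fract (logb b (x / q)) :=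
    continuousAt_fract fun h => hfract.ne' (by rw [← Int.self_sub_floor, ← h, sub_self])
  refine (hcont.tendsto.comp hL).congr' ?_
  filter_upwards [hsplit] with n hn
  rw [Function.comp_apply, hn, Int.fract_add_natCast]

theorem rpow_mul_volume_tail_eq {lam α : ℝ} (hlam0 : 0 < lam) (hlam1 : lam < 1)
    (hlamG : goldG ^ (-α) = lam) {τ : ℝ → ℕ}
    (hτ : ∀ n : ℕ, ∀ y ∈ Ioc (lam ^ (n + 1)) (lam ^ n), τ y = fibS n) {x : ℝ} (hx : qZero ≤ x)
    (hlevel : (fibS ⌊logb goldG (x / qZero)⌋₊ : ℝ) ≤ x ∧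
      x < fibS (⌊logb goldG (x / qZero)⌋₊ + 1)) :
    x ^ α * (volume {y : ℝ | y ∈ Ioc (0 : ℝ) 1 ∧ x < (τ y : ℝ)}).toReal =
      lam * qZero ^ α * goldG ^ (α * Int.fract (logb goldG (x / qZero))) := by
  rw [setOf_lt_eq_Ioc_pow hlam0 hlam1 fibS_monotone hτ hlevel.1 hlevel.2, volume_Ioc,
    sub_zero, ENNReal.toReal_ofReal (by positivity), ← hlamG,
    rpow_mul_rpow_neg_pow_eq one_lt_goldG qZero_pos (qZero_pos.trans_le hx) α
      (natFloor_add_fract (logb_nonneg one_lt_goldG ((one_le_div qZero_pos).2 hx)))]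

/-- the Fibonacci return time is in the domain of geometric partial
attraction of a semistable law. With `h(x) = x^α m(τ > x) − M(x)`, so that
`m(τ > x) = x^{−α}(M(x) + h(x))`, one has `h(A_{k_n} x) → 0` for every continuity point
`x` of `M` (i.e. every `x > 0` with `{log_G(x/q₀)} > 0`), where `k_n = ⌊G^{αn}⌋` and
`A_{k_n} = k_n^{1/α}`. -/
theorem stmt_13 (lam : ℝ) (hlam1 : 1 / goldG < lam) (hlam2 : lam < 1)
    (α : ℝ) (hα : α = -Real.log lam / Real.log goldG)
    -- the return time τ: τ(y) = S_n for y ∈ (λ^{n+1}, λ^n]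
    (τ : ℝ → ℕ)
    (hτ : ∀ n : ℕ, ∀ y ∈ Set.Ioc (lam ^ (n + 1)) (lam ^ n), τ y = fibS n)
    -- the logarithmically periodic function M(x) = q_∞ G^{α{log_G(x/q₀)}}, q_∞ = λ q₀^α
    (M : ℝ → ℝ)
    (hM : ∀ x > (0 : ℝ), M x =
      (lam * qZero ^ α) * goldG ^ (α * Int.fract (Real.log (x / qZero) / Real.log goldG)))
    -- the error function h(x) = x^α · m(τ > x) − M(x)
    (h : ℝ → ℝ)
    (hh : ∀ x ≥ (1 : ℝ), h x =
      x ^ α * (volume {y : ℝ | y ∈ Set.Ioc (0 : ℝ) 1 ∧ x < (τ y : ℝ)}).toReal - M x) :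
    (∀ x ≥ (1 : ℝ),
      (volume {y : ℝ | y ∈ Set.Ioc (0 : ℝ) 1 ∧ x < (τ y : ℝ)}).toReal
        = x ^ (-α) * (M x + h x)) ∧
    ∀ x > (0 : ℝ), 0 < Int.fract (Real.log (x / qZero) / Real.log goldG) →
      Filter.Tendsto
        (fun n : ℕ => h (((⌊goldG ^ (α * (n : ℝ))⌋₊ : ℝ) ^ (1 / α)) * x))
        Filter.atTop (nhds 0) := by
  have hG0 : 0 < goldG := zero_lt_one.trans one_lt_goldG
  have hlam0 : 0 < lam := (one_div_pos.2 hG0).trans hlam1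
  have hα0 : 0 < α := hα ▸ div_pos (neg_pos.2 (log_neg hlam0 hlam2)) (log_pos one_lt_goldG)
  have hlamG : goldG ^ (-α) = lam := by
    rw [rpow_def_of_pos hG0, show log goldG * -α = log lam by
      rw [hα]; field_simp [(log_pos one_lt_goldG).ne'], exp_log hlam0]
  simp only [log_div_log] at hM ⊢
  refine ⟨fun x hx => ?_, fun x hx hfract => ?_⟩
  · rw [hh x hx, add_sub_cancel, ← mul_assoc, ← rpow_add (by linarith), neg_add_cancel,
      rpow_zero, one_mul]
  set β := Int.fract (logb goldG (x / qZero))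
  have hβ1 : β < 1 := Int.fract_lt_one _
  set y : ℕ → ℝ := fun n => (⌊goldG ^ (α * n)⌋₊ : ℝ) ^ (1 / α) * x
  have hr := tendsto_natFloor_rpow_div_pow one_lt_goldG hα0
  have hy : Tendsto y atTop atTop :=
    (tendsto_atTop_of_div_pow_tendsto_one one_lt_goldG hr).atTop_mul_const hx
  have hfract_y := tendsto_fract_logb_mul_div one_lt_goldG qZero_pos hx hfract hr
  have hmem : ∀ᶠ n in atTop, Int.fract (logb goldG (y n / qZero)) ∈ Icc (β / 2) ((β + 1) / 2) :=
    hfract_y (Icc_mem_nhds (by linarith) (by linarith))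
  have hlevel := hy.eventually (eventually_level_eq_natFloor_logb one_lt_goldG qZero_pos
    abs_fibS_sub_le (half_pos hfract) (c := (β + 1) / 2) (by linarith))
  refine tendsto_const_nhds.congr' ?_
  filter_upwards [hmem, hlevel, hy.eventually_ge_atTop qZero, hy.eventually_ge_atTop 1]
    with n hn_mem hn_level hn_q hn_one
  rw [hh _ hn_one, rpow_mul_volume_tail_eq hlam0 hlam2 hlamG hτ hn_q (hn_level hn_mem),
    hM _ (qZero_pos.trans_le hn_q), sub_self]
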